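/- Let μ, λ > 0, let ν ∈ ℝⁿ be a unit vector, and let g ∈ ℝⁿ be given. Suppose w: ℝⁿ → ℝⁿ is differentiable at a point with ∇w_i = d_i ν for scalars d_i (i = 1,…,n), i.e., each component's gradient is parallel to ν. Then the equation σ(w)ν = g (with σ(w) = 2με(w) + λ tr(ε(w))I_n) is equivalent to d_i = (1/μ)(g_i − ((μ+λ)ν_i/(2μ+λ)) ∑_j g_j ν_j) for each i. -/

import Mathlib

open scoped RealInnerProductSpace

noncomputable section

/-- The linearized strain tensor `ε(w)_{ij} = ½(∂_j w_i + ∂_i w_j)`. -/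
def epsM (n : ℕ) (w : EuclideanSpace ℝ (Fin n) → EuclideanSpace ℝ (Fin n))
    (x : EuclideanSpace ℝ (Fin n)) (i j : Fin n) : ℝ :=
  (1 / 2) * (fderiv ℝ (fun y => w y i) x (EuclideanSpace.single j 1) +
             fderiv ℝ (fun y => w y j) x (EuclideanSpace.single i 1))

/-- The isotropic stress tensor `σ(w) = 2με(w) + λ tr(ε(w)) Iₙ`. -/
def sigM (n : ℕ) (μ lam : ℝ) (w : EuclideanSpace ℝ (Fin n) → EuclideanSpace ℝ (Fin n))
    (x : EuclideanSpace ℝ (Fin n)) (i j : Fin n) : ℝ :=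
  2 * μ * epsM n w x i j + (if i = j then lam * (∑ k : Fin n, epsM n w x k k) else 0)

/-!
Since every `∇wᵢ = dᵢ ν`, the strain is the symmetrised rank-one tensor `ε = ½(d ⊗ ν + ν ⊗ d)`,
whose trace is `d ⬝ ν`; with `|ν| = 1` this gives `σν = μ d + (μ + λ)(d ⬝ ν) ν`. Dotting
`σν = g` with `ν` yields `g ⬝ ν = (2μ + λ)(d ⬝ ν)`, which determines `d ⬝ ν` and hence `d`.
-/

open Matrix

theorem EuclideanSpace.dotProduct_self_eq_norm_sq {ι : Type*} [Fintype ι] (ν : EuclideanSpace ℝ ι) :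
    ν.ofLp ⬝ᵥ ν.ofLp = ‖ν‖ ^ 2 := by
  rw [← real_inner_self_eq_norm_sq, EuclideanSpace.inner_eq_star_dotProduct, star_trivial]

theorem fderiv_apply_single_eq_of_hasFDerivAt_smul_innerSL {ι : Type*} [Fintype ι] [DecidableEq ι]
    {f : EuclideanSpace ℝ ι → ℝ} {c : ℝ} {ν x : EuclideanSpace ℝ ι}
    (hf : HasFDerivAt f (c • innerSL ℝ ν) x) (j : ι) :
    fderiv ℝ f x (EuclideanSpace.single j 1) = c * ν j := by
  simp [hf.fderiv, EuclideanSpace.inner_single_right]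

theorem epsM_eq_of_hasFDerivAt {n : ℕ} {d : Fin n → ℝ}
    {w : EuclideanSpace ℝ (Fin n) → EuclideanSpace ℝ (Fin n)} {ν x : EuclideanSpace ℝ (Fin n)}
    (hw : ∀ i, HasFDerivAt (fun y => w y i) (d i • innerSL ℝ ν) x) (i j : Fin n) :
    epsM n w x i j = (d i * ν j + d j * ν i) / 2 := by
  rw [epsM, fderiv_apply_single_eq_of_hasFDerivAt_smul_innerSL (hw i),
    fderiv_apply_single_eq_of_hasFDerivAt_smul_innerSL (hw j)]
  ring

theorem sigM_eq_of_hasFDerivAt {n : ℕ} {μ lam : ℝ} {d : Fin n → ℝ}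
    {w : EuclideanSpace ℝ (Fin n) → EuclideanSpace ℝ (Fin n)} {ν x : EuclideanSpace ℝ (Fin n)}
    (hw : ∀ i, HasFDerivAt (fun y => w y i) (d i • innerSL ℝ ν) x) (i j : Fin n) :
    sigM n μ lam w x i j =
      μ * (d i * ν j + d j * ν i) + if i = j then lam * (d ⬝ᵥ ν.ofLp) else 0 := by
  have htrace : ∑ k, epsM n w x k k = d ⬝ᵥ ν.ofLp :=
    Finset.sum_congr rfl fun k _ => by rw [epsM_eq_of_hasFDerivAt hw]; ring
  rw [sigM, htrace, epsM_eq_of_hasFDerivAt hw]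
  ring

theorem sum_sigM_mul_eq_of_hasFDerivAt {n : ℕ} {μ lam : ℝ} {d : Fin n → ℝ}
    {w : EuclideanSpace ℝ (Fin n) → EuclideanSpace ℝ (Fin n)} {ν x : EuclideanSpace ℝ (Fin n)}
    (hw : ∀ i, HasFDerivAt (fun y => w y i) (d i • innerSL ℝ ν) x) (hν : ν.ofLp ⬝ᵥ ν.ofLp = 1)
    (i : Fin n) :
    ∑ j, sigM n μ lam w x i j * ν j = μ * d i + (μ + lam) * ν i * (d ⬝ᵥ ν.ofLp) := by
  calc ∑ j, sigM n μ lam w x i j * ν j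
      = ∑ j, (μ * d i * (ν j * ν j) + μ * ν i * (d j * ν j) +
          if i = j then lam * (d ⬝ᵥ ν.ofLp) * ν j else 0) :=
        Finset.sum_congr rfl fun j _ => by
          rw [sigM_eq_of_hasFDerivAt hw]; split_ifs <;> ring
    _ = μ * d i * (ν.ofLp ⬝ᵥ ν.ofLp) + μ * ν i * (d ⬝ᵥ ν.ofLp) + lam * (d ⬝ᵥ ν.ofLp) * ν i := by
        simp only [Finset.sum_add_distrib, ← Finset.mul_sum, Finset.sum_ite_eq, Finset.mem_univ,
          if_true, dotProduct]
    _ = μ * d i + (μ + lam) * ν i * (d ⬝ᵥ ν.ofLp) := by rw [hν]; ring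

theorem lame_rankOne_eq_iff {K ι : Type*} [Field K] [Fintype ι] {μ lam : K} {ν g d : ι → K}
    (hμ : μ ≠ 0) (hμlam : 2 * μ + lam ≠ 0) (hν : ν ⬝ᵥ ν = 1) :
    (∀ i, μ * d i + (μ + lam) * ν i * (d ⬝ᵥ ν) = g i) ↔
      ∀ i, d i = (1 / μ) * (g i - ((μ + lam) * ν i / (2 * μ + lam)) * (g ⬝ᵥ ν)) := by
  -- kept atomic so that `field_simp` recognises the denominator as nonzero
  set c := 2 * μ + lam
  constructor
  · intro h
    have hg : g = μ • d + ((μ + lam) * (d ⬝ᵥ ν)) • ν := by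
      ext i; rw [← h i]; simp only [Pi.add_apply, Pi.smul_apply, smul_eq_mul]; ring
    have hgν : g ⬝ᵥ ν = c * (d ⬝ᵥ ν) := by
      rw [hg, add_dotProduct, smul_dotProduct, smul_dotProduct, hν, smul_eq_mul, smul_eq_mul]
      ring
    intro i
    rw [← h i, hgν]
    field_simp
    ring
  · intro h
    have hd : d = (1 / μ) • (g - ((μ + lam) / c * (g ⬝ᵥ ν)) • ν) := by
      ext i; rw [h i]; simp only [Pi.sub_apply, Pi.smul_apply, smul_eq_mul]; ring
    have hdν : d ⬝ᵥ ν = (g ⬝ᵥ ν) / c := by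
      rw [hd, smul_dotProduct, sub_dotProduct, smul_dotProduct, hν, smul_eq_mul, smul_eq_mul]
      field_simp
      ring
    intro i
    rw [h i, hdν]
    field_simp
    ring

/-- the algebraic inversion in the elastic trace lemma. Let `μ, λ > 0`, `ν` a
unit vector, `g ∈ ℝⁿ`, and let `w` be differentiable at `x` with each component's gradient
parallel to `ν`: `∇w_i = d_i ν`. Then `σ(w)ν = g` at `x` iff
`d_i = (1/μ)(g_i − ((μ+λ)ν_i/(2μ+λ)) ∑_j g_j ν_j)` for each `i`. -/
theorem elastic_trace_algebraic_inversion
    (n : ℕ) (μ lam : ℝ) (hμ : 0 < μ) (hlam : 0 < lam)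
    (ν : EuclideanSpace ℝ (Fin n)) (hν : ‖ν‖ = 1)
    (g d : Fin n → ℝ)
    (w : EuclideanSpace ℝ (Fin n) → EuclideanSpace ℝ (Fin n))
    (x : EuclideanSpace ℝ (Fin n))
    (hw : ∀ i : Fin n, HasFDerivAt (fun y => w y i) ((d i) • (innerSL ℝ ν)) x) :
    (∀ i : Fin n, (∑ j : Fin n, sigM n μ lam w x i j * ν j) = g i) ↔
    (∀ i : Fin n, d i =
      (1 / μ) * (g i - ((μ + lam) * ν i / (2 * μ + lam)) * ∑ j : Fin n, g j * ν j)) := by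
  have hν' : ν.ofLp ⬝ᵥ ν.ofLp = 1 := by
    rw [EuclideanSpace.dotProduct_self_eq_norm_sq, hν, one_pow]
  simp only [sum_sigM_mul_eq_of_hasFDerivAt hw hν']
  exact lame_rankOne_eq_iff hμ.ne' (by positivity) hν'
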